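/- Let Q = ∑_{i=1}^r p_i M_i where (p₁, …, p_r) is a probability vector and M₁, …, M_r are permutation matrices of permutations σ₁, …, σ_r ∈ S_n. Let S = {x ∈ [n] : ∃ i ≠ j, σ_i(x) = σ_j(x)}. Then the normalized Hilbert–Schmidt norm satisfies ‖Q‖_HS ≤ sqrt(∑_i p_i²) + sqrt(|S|/n). In particular, if S = ∅, then ‖Q‖_HS = sqrt(∑_i p_i²). -/

import Mathlib

/-!
Expanding the square, the `x`-th row of `Q` contributes
`∑ y, Q x y ^ 2 = ∑ i, ∑ j, p i * p j * [σ i x = σ j x]`.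
For `x ∉ S` only the diagonal `i = j` survives, giving `∑ i, p i ^ 2`; for `x ∈ S` the row
contributes at most `(∑ i, p i) ^ 2 = 1`. Summing over the rows,
`‖Q‖_HS ^ 2 ≤ ∑ i, p i ^ 2 + |S| / n`, and `√(a + b) ≤ √a + √b` finishes.
-/

open Finset

lemma Real.sqrt_add_le_sqrt_add_sqrt {a b : ℝ} (ha : 0 ≤ a) (hb : 0 ≤ b) :
    √(a + b) ≤ √a + √b := by
  rw [← Real.sqrt_sq (by positivity : 0 ≤ √a + √b)]
  apply Real.sqrt_le_sqrt
  nlinarith [Real.sq_sqrt ha, Real.sq_sqrt hb, Real.sqrt_nonneg a, Real.sqrt_nonneg b]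

section Collision

variable {ι α : Type*} [Fintype ι] [DecidableEq α] (p : ι → ℝ) (f : ι → α)

lemma sum_sq_sum_mul_indicator [Fintype α] :
    ∑ y, (∑ i, p i * if f i = y then 1 else 0) ^ 2
      = ∑ i, ∑ j, p i * p j * if f i = f j then 1 else 0 := by
  simp_rw [sq, sum_mul_sum, mul_ite, mul_one, mul_zero, ite_mul, zero_mul]
  rw [sum_comm]
  refine sum_congr rfl fun i _ => ?_
  rw [sum_comm]
  refine sum_congr rfl fun j _ => ?_
  simp only [sum_ite_eq, mem_univ, ↓reduceIte]

lemma sum_sum_mul_indicator_of_injective (hf : Function.Injective f) :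
    ∑ i, ∑ j, p i * p j * (if f i = f j then 1 else 0) = ∑ i, p i ^ 2 := by
  refine sum_congr rfl fun i _ => ?_
  rw [sum_eq_single i (fun j _ hji => by simp [hf.ne hji.symm]) (by simp)]
  simp [sq]

lemma sum_sum_mul_indicator_le_sq_sum (hp : ∀ i, 0 ≤ p i) :
    ∑ i, ∑ j, p i * p j * (if f i = f j then 1 else 0) ≤ (∑ i, p i) ^ 2 := by
  rw [sq, sum_mul_sum]
  refine sum_le_sum fun i _ => sum_le_sum fun j _ => ?_
  have := mul_nonneg (hp i) (hp j)
  split_ifs <;> simp [this]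

end Collision

section Rows

variable {ι α : Type*} [Fintype ι] [Fintype α] [DecidableEq α]
  {p : ι → ℝ} {σ : ι → α → α} {Q : Matrix α α ℝ}

lemma sum_sum_sq_le_card_mul_add_card
    [DecidablePred fun x => ∃ i j, i ≠ j ∧ σ i x = σ j x]
    (hp0 : ∀ i, 0 ≤ p i) (hp1 : ∑ i, p i = 1)
    (hQ : ∀ x y, Q x y = ∑ i, p i * if σ i x = y then 1 else 0) :
    ∑ x, ∑ y, Q x y ^ 2 ≤ Fintype.card α * ∑ i, p i ^ 2
      + #{x | ∃ i j, i ≠ j ∧ σ i x = σ j x} := by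
  have hrow (x : α) : ∑ y, Q x y ^ 2
      ≤ ∑ i, p i ^ 2 + if ∃ i j, i ≠ j ∧ σ i x = σ j x then 1 else 0 := by
    simp_rw [hQ, sum_sq_sum_mul_indicator]
    split_ifs with hx
    · calc _ ≤ (∑ i, p i) ^ 2 := sum_sum_mul_indicator_le_sq_sum p _ hp0
        _ = 1 := by rw [hp1, one_pow]
        _ ≤ _ := le_add_of_nonneg_left (sum_nonneg fun i _ => sq_nonneg (p i))
    · rw [sum_sum_mul_indicator_of_injective p _
        fun i j hij => by_contra fun hne => hx ⟨i, j, hne, hij⟩, add_zero]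
  calc ∑ x, ∑ y, Q x y ^ 2 ≤ ∑ x, (∑ i, p i ^ 2 + _) := sum_le_sum fun x _ => hrow x
    _ = _ := by rw [sum_add_distrib, sum_const, sum_boole, card_univ, nsmul_eq_mul]

lemma sum_sum_sq_eq_card_mul_of_injective
    (hQ : ∀ x y, Q x y = ∑ i, p i * if σ i x = y then 1 else 0)
    (hσ : ∀ x, Function.Injective fun i => σ i x) :
    ∑ x, ∑ y, Q x y ^ 2 = Fintype.card α * ∑ i, p i ^ 2 := by
  simp_rw [hQ, sum_sq_sum_mul_indicator, sum_sum_mul_indicator_of_injective p _ (hσ _),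
    sum_const, card_univ, nsmul_eq_mul]

end Rows

/-- For `Q = ∑ pᵢ Mᵢ` a convex combination of permutation matrices,
`‖Q‖_HS ≤ sqrt(∑ pᵢ²) + sqrt(|S|/n)`, with equality `‖Q‖_HS = sqrt(∑ pᵢ²)` when `S = ∅`,
where `S = {x : ∃ i ≠ j, σᵢ(x) = σⱼ(x)}`. -/
theorem stmt10 (n r : ℕ) (hn : 0 < n) (p : Fin r → ℝ)
    (hp0 : ∀ i, 0 ≤ p i) (hp1 : ∑ i, p i = 1)
    (σ : Fin r → Equiv.Perm (Fin n))
    (Q : Matrix (Fin n) (Fin n) ℝ)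
    (hQ : ∀ x y, Q x y = ∑ i, p i * (if σ i x = y then 1 else 0)) :
    Real.sqrt ((1 / n) * ∑ x, ∑ y, Q x y ^ 2)
      ≤ Real.sqrt (∑ i, p i ^ 2) +
        Real.sqrt (((Finset.univ.filter
          (fun x : Fin n => ∃ i j, i ≠ j ∧ σ i x = σ j x)).card : ℝ) / n) ∧
    ((Finset.univ.filter (fun x : Fin n => ∃ i j, i ≠ j ∧ σ i x = σ j x)) = ∅ →
      Real.sqrt ((1 / n) * ∑ x, ∑ y, Q x y ^ 2) = Real.sqrt (∑ i, p i ^ 2)) := by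
  have hn' : (0 : ℝ) < n := by exact_mod_cast hn
  constructor
  · have hle := sum_sum_sq_le_card_mul_add_card (σ := fun i => σ i) hp0 hp1 hQ
    rw [Fintype.card_fin] at hle
    have hnorm_sq : 1 / n * ∑ x, ∑ y, Q x y ^ 2
        ≤ ∑ i, p i ^ 2 + #{x | ∃ i j, i ≠ j ∧ σ i x = σ j x} / n := by
      rw [one_div_mul_eq_div, div_le_iff₀ hn', add_mul, div_mul_cancel₀ _ hn'.ne']
      linarith
    exact (Real.sqrt_le_sqrt hnorm_sq).trans
      (Real.sqrt_add_le_sqrt_add_sqrt (sum_nonneg fun i _ => sq_nonneg (p i)) (by positivity))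
  · intro hS
    have hinj (x : Fin n) : Function.Injective fun i => σ i x := fun i j hij =>
      by_contra fun hne =>
        eq_empty_iff_forall_notMem.mp hS x (mem_filter.mpr ⟨mem_univ x, i, j, hne, hij⟩)
    rw [sum_sum_sq_eq_card_mul_of_injective (σ := fun i => σ i) hQ hinj, Fintype.card_fin,
      one_div_mul_eq_div, mul_div_cancel_left₀ _ hn'.ne']
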